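/- Let n ≥ 3. The encoded vertices satisfy the recursion v^n(k) = 2^{C(n−1,2)} · (k − 1) + v^{n−1}(2^{n−2} + 1 − k) for k ∈ {1, …, 2^{n−2}}, and v^n(k) = 2^{C(n−1,2)} · (k − 1) + v^{n−1}(k − 2^{n−2}) for k ∈ {2^{n−2} + 1, …, 2^{n−1}}. -/

import Mathlib

/-!
The leading bit of `2^(n-1) + k - 1` is `1`, and `λ(1 :: t) = t ++ λ(t)`, so the code of
`λ(decode_n(2^(n-1) + k - 1))` splits as `(k - 1) · 2^C(n-1,2) + λ#_{n-1}(k - 1)`. When `k - 1`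
already has leading bit `1` this last term is `v^{n-1}(k - 2^(n-2))`; otherwise we pass to the
bitwise complement `2^(n-1) - 1 - (k - 1)`, which has leading bit `1` and the same image under `λ`,
since `λ` only records which coordinates agree.
-/

/-- Integer encoding of a binary vector (MSB first): code(x) = Σ x_j 2^(m-j). -/
def code (x : List Bool) : ℕ := x.foldl (fun a b => 2 * a + (if b then 1 else 0)) 0

/-- m-bit binary representation (MSB first) of an integer k. -/
def decode (m k : ℕ) : List Bool := (List.range m).map (fun j => k.testBit (m - 1 - j))

/-- Agreement-indicator map: λ(x) lists 𝟙(x_i = x_j) for pairs i < j in lex order. -/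
def lam : List Bool → List Bool
  | [] => []
  | a :: t => (t.map (fun b => a == b)) ++ lam t

/-- Integer-level map λ#_n. -/
def lambdaSharp (n k : ℕ) : ℕ := code (lam (decode n k))

/-- Encoded vertices of 𝟙-CUT(n): v^n(k) = λ#_n(2^(n-1) + k - 1). -/
def v (n k : ℕ) : ℕ := lambdaSharp n (2 ^ (n - 1) + k - 1)

theorem Nat.testBit_two_pow_sub_one_sub {m k j : ℕ} (hk : k < 2 ^ m) (hj : j < m) :
    (2 ^ m - 1 - k).testBit j = !k.testBit j := by
  have h : 2 ^ m - 1 - k = (~~~(BitVec.ofNat m k)).toNat := by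
    rw [BitVec.toNat_not, BitVec.toNat_ofNat, Nat.mod_eq_of_lt hk]
  rw [h, BitVec.testBit_toNat, BitVec.getLsbD_not, BitVec.getLsbD_ofNat]
  simp [hj]

lemma foldl_bit_eq_mul_add_code (t : List Bool) (i : ℕ) :
    t.foldl (fun a b => 2 * a + (if b then 1 else 0)) i = i * 2 ^ t.length + code t := by
  induction t generalizing i with
  | nil => simp [code]
  | cons a t ih =>
    simp only [code, List.foldl_cons, List.length_cons, ih (2 * i + _), ih (2 * 0 + _)]
    ring

lemma code_append (s t : List Bool) : code (s ++ t) = code s * 2 ^ t.length + code t := by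
  rw [code, List.foldl_append, foldl_bit_eq_mul_add_code, ← code]

lemma code_cons (a : Bool) (t : List Bool) :
    code (a :: t) = (if a then 1 else 0) * 2 ^ t.length + code t := by
  rw [← List.singleton_append, code_append]
  cases a <;> rfl

lemma length_decode (m k : ℕ) : (decode m k).length = m := by
  simp [decode]

lemma decode_succ (m k : ℕ) : decode (m + 1) k = k.testBit m :: decode m k := by
  simp only [decode, List.range_succ_eq_map, List.map_cons, List.map_map]
  exact congrArg _ (List.map_congr_left fun j _ => congrArg k.testBit (by omega))

lemma code_decode (m k : ℕ) : code (decode m k) = k % 2 ^ m := by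
  induction m with
  | zero => simp [decode, code, Nat.mod_one]
  | succ m ih =>
    rw [decode_succ, code_cons, length_decode, ih, Nat.mod_pow_succ,
      Nat.testBit_eq_decide_div_mod_eq]
    rcases Nat.mod_two_eq_zero_or_one (k / 2 ^ m) with h | h <;> simp [h]; ring

lemma decode_two_pow_add (m j : ℕ) : decode m (2 ^ m + j) = decode m j := by
  refine List.map_congr_left fun i hi => ?_
  rw [List.mem_range] at hi
  exact Nat.testBit_two_pow_add_gt (by omega) j

lemma decode_two_pow_sub_one_sub {m k : ℕ} (hk : k < 2 ^ m) :
    decode m (2 ^ m - 1 - k) = (decode m k).map Bool.not := by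
  unfold decode
  rw [List.map_map]
  refine List.map_congr_left fun j hj => ?_
  rw [List.mem_range] at hj
  exact Nat.testBit_two_pow_sub_one_sub hk (by omega)

lemma length_lam (t : List Bool) : (lam t).length = t.length.choose 2 := by
  induction t with
  | nil => rfl
  | cons a t ih =>
    rw [lam, List.length_append, List.length_map, ih, List.length_cons, Nat.choose_succ_succ,
      Nat.choose_one_right]

lemma lam_true_cons (t : List Bool) : lam (true :: t) = t ++ lam t := by
  rw [lam, List.map_congr_left (g := id) fun b _ => by cases b <;> rfl, List.map_id]

lemma lam_map_not (t : List Bool) : lam (t.map Bool.not) = lam t := by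
  induction t with
  | nil => rfl
  | cons a t ih =>
    rw [List.map_cons, lam, lam, ih, List.map_map]
    congr 1
    exact List.map_congr_left fun b _ => by cases a <;> cases b <;> rfl

lemma lambdaSharp_two_pow_sub_one_sub {m k : ℕ} (hk : k < 2 ^ m) :
    lambdaSharp m (2 ^ m - 1 - k) = lambdaSharp m k := by
  rw [lambdaSharp, lambdaSharp, decode_two_pow_sub_one_sub hk, lam_map_not]

lemma v_succ {m k : ℕ} (hk : 1 ≤ k) (hk2 : k ≤ 2 ^ m) :
    v (m + 1) k = 2 ^ m.choose 2 * (k - 1) + lambdaSharp m (k - 1) := by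
  have hlt : k - 1 < 2 ^ m := by omega
  have hlead : (2 ^ m + (k - 1)).testBit m = true := by
    rw [Nat.testBit_two_pow_add_eq, Nat.testBit_lt_two_pow hlt, Bool.not_false]
  rw [v, Nat.add_sub_cancel, Nat.add_sub_assoc hk, lambdaSharp, decode_succ, hlead,
    decode_two_pow_add, lam_true_cons, code_append, length_lam, length_decode, code_decode,
    Nat.mod_eq_of_lt hlt, lambdaSharp, mul_comm]

theorem stmt_8 (n : ℕ) (hn : 3 ≤ n) (k : ℕ) (hk : 1 ≤ k) (hk2 : k ≤ 2 ^ (n - 1)) :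
    (k ≤ 2 ^ (n - 2) →
      v n k = 2 ^ Nat.choose (n - 1) 2 * (k - 1) + v (n - 1) (2 ^ (n - 2) + 1 - k)) ∧
    (2 ^ (n - 2) + 1 ≤ k →
      v n k = 2 ^ Nat.choose (n - 1) 2 * (k - 1) + v (n - 1) (k - 2 ^ (n - 2))) := by
  obtain ⟨m, rfl⟩ : ∃ m, n = m + 2 := ⟨n - 2, by omega⟩
  simp only [Nat.reduceSubDiff] at hk2 ⊢
  have hpow : 2 ^ (m + 1) = 2 ^ m + 2 ^ m := by rw [pow_succ, mul_two]
  rw [v_succ hk hk2]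
  simp only [v, Nat.add_sub_cancel]
  constructor
  · intro hle
    rw [← lambdaSharp_two_pow_sub_one_sub (m := m + 1) (by omega)]
    congr 2
    omega
  · intro hge
    congr 2
    omega
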